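/- arXiv:2205.08017 — 2 statements merged into one kernel-verified Lean document; each statement's English description precedes it below -/
import Mathlib

section
/- Excess error Ψ-bound for all measurable functions: Let H_all be the set of all measurable functions X→ℝ and Φ:ℝ→[0,∞) a margin-based loss. Assume there exists a convex function Ψ:[0,∞)→ℝ with Ψ(0)=0 such that for every x∈X, Ψ(2|η(x)−1/2|) ≤ inf{ΔC_{ℓ_Φ,H_all}(h,x) : h∈H_all, sign(h(x))·(η(x)−1/2) ≤ 0}. Then for every measurable h:X→ℝ, Ψ(R_{ℓ_{0-1}}(h) − R*_{ℓ_{0-1},H_all}) ≤ R_{ℓ_Φ}(h) − R*_{ℓ_Φ,H_all}. -/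
open MeasureTheory Set

noncomputable section

/-- Conditional `ℓ`-risk of `h` at `x` with conditional probability level `t`. -/
def condRiskT {X : Type*} (ℓ : (X → ℝ) → X → ℝ → ℝ) (h : X → ℝ) (x : X) (t : ℝ) : ℝ :=
  t * ℓ h x 1 + (1 - t) * ℓ h x (-1)

/-- Conditional `ℓ`-risk of `h` at `x`. -/
def condRisk {X : Type*} (ℓ : (X → ℝ) → X → ℝ → ℝ) (η : X → ℝ) (h : X → ℝ) (x : X) : ℝ :=
  condRiskT ℓ h x (η x)

/-- Minimal conditional `ℓ`-risk over the hypothesis set `H` at `x`. -/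
def condRiskStar {X : Type*} (ℓ : (X → ℝ) → X → ℝ → ℝ) (η : X → ℝ) (H : Set (X → ℝ))
    (x : X) : ℝ :=
  sInf ((fun h => condRisk ℓ η h x) '' H)

/-- `ΔC_{ℓ,H}(h,x)`. -/
def deltaC {X : Type*} (ℓ : (X → ℝ) → X → ℝ → ℝ) (η : X → ℝ) (H : Set (X → ℝ))
    (h : X → ℝ) (x : X) : ℝ :=
  condRisk ℓ η h x - condRiskStar ℓ η H x

/-- `ΔC_{ℓ,H}(h,x,t)`. -/
def deltaCT {X : Type*} (ℓ : (X → ℝ) → X → ℝ → ℝ) (H : Set (X → ℝ))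
    (h : X → ℝ) (x : X) (t : ℝ) : ℝ :=
  condRiskT ℓ h x t - sInf ((fun h' => condRiskT ℓ h' x t) '' H)

/-- Generalization error `R_ℓ(h)`. -/
def genErr {X : Type*} [MeasurableSpace X] (μ : Measure X)
    (ℓ : (X → ℝ) → X → ℝ → ℝ) (η : X → ℝ) (h : X → ℝ) : ℝ :=
  ∫ x, condRisk ℓ η h x ∂μ

/-- Best-in-class error `R*_{ℓ,H}`. -/
def bestErr {X : Type*} [MeasurableSpace X] (μ : Measure X)
    (ℓ : (X → ℝ) → X → ℝ → ℝ) (η : X → ℝ) (H : Set (X → ℝ)) : ℝ :=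
  sInf ((fun h => genErr μ ℓ η h) '' H)

/-- Minimizability gap `M_{ℓ,H}`. -/
def minGap {X : Type*} [MeasurableSpace X] (μ : Measure X)
    (ℓ : (X → ℝ) → X → ℝ → ℝ) (η : X → ℝ) (H : Set (X → ℝ)) : ℝ :=
  bestErr μ ℓ η H - ∫ x, condRiskStar ℓ η H x ∂μ

/-- `ε`-truncation `⟨t⟩_ε = t · 1_{t > ε}`. -/
def trunc (ε t : ℝ) : ℝ := if ε < t then t else 0

/-- sign function: `+1` if `α ≥ 0`, `−1` otherwise. -/
def sgn (a : ℝ) : ℝ := if 0 ≤ a then 1 else -1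

/-- The zero-one loss `ℓ_{0-1}(h,x,y) = 1_{sign(h(x)) ≠ y}`. -/
def loss01 {X : Type*} (h : X → ℝ) (x : X) (y : ℝ) : ℝ :=
  if sgn (h x) ≠ y then 1 else 0

/-- Margin-based loss `ℓ_Φ(h,x,y) = Φ(y h(x))`. -/
def marginLoss {X : Type*} (Φ : ℝ → ℝ) (h : X → ℝ) (x : X) (y : ℝ) : ℝ :=
  Φ (y * h x)

end

/-!
Pointwise, the excess conditional zero-one risk of `h` at `x` is `2 |η x - 1/2|` when `h x` has
the wrong sign and `0` otherwise, so the hypothesis on `Ψ` together with `Ψ 0 = 0` bounds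
`Ψ` of it by the excess conditional `Φ`-risk `ΔC(h, x)`. Since the hypothesis set contains all
measurable functions, the best-in-class zero-one error is attained by the Bayes classifier
`η - 1/2`, and the best-in-class `Φ`-risk is approached by measurable selections of
`ε`-minimizers of `α ↦ η x Φ(α) + (1 - η x) Φ(-α)`; these exist because the infimum over `α`
can be taken over a countable set of predictions, dense for the pair `(Φ α, Φ (-α))`.
Integrating the pointwise bound against a supporting line of `Ψ` gives the claim.
-/

namespace ConvexOn

variable {S : Set ℝ} {f : ℝ → ℝ}

lemma add_rightDeriv_mul_sub_le (hf : ConvexOn ℝ S f) {x y : ℝ} (hx : x ∈ interior S)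
    (hy : y ∈ S) : f x + derivWithin f (Ioi x) x * (y - x) ≤ f y := by
  rcases lt_trichotomy x y with hxy | rfl | hyx
  · have h := hf.rightDeriv_le_slope_of_mem_interior hx hy hxy
    rw [slope_def_field, le_div_iff₀ (sub_pos.2 hxy)] at h
    linarith
  · simp
  · have hslope := hf.slope_le_leftDeriv_of_mem_interior hy hx hyx
    have hderiv := mul_le_mul_of_nonneg_right (hf.leftDeriv_le_rightDeriv_of_mem_interior hx)
      (sub_pos.2 hyx).le
    rw [slope_def_field, div_le_iff₀ (sub_pos.2 hyx)] at hslope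
    linarith

/-- Jensen's inequality for a convex function on `[0, ∞)`, without any regularity assumption. -/
lemma map_integral_le_of_ae_le {X : Type*} [MeasurableSpace X] {μ : Measure X}
    [IsProbabilityMeasure μ] (hf : ConvexOn ℝ (Ici 0) f) {Z F : X → ℝ} (hZ0 : 0 ≤ᵐ[μ] Z)
    (hZ : Integrable Z μ) (hF : Integrable F μ) (hle : ∀ᵐ x ∂μ, f (Z x) ≤ F x) :
    f (∫ x, Z x ∂μ) ≤ ∫ x, F x ∂μ := by
  rcases (integral_nonneg_of_ae hZ0).eq_or_lt with hzero | hpos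
  · have hZae : Z =ᵐ[μ] 0 := (integral_eq_zero_iff_of_nonneg_ae hZ0 hZ).1 hzero.symm
    rw [← hzero]
    calc f 0 = ∫ _, f 0 ∂μ := by simp
      _ ≤ ∫ x, F x ∂μ := integral_mono_ae (integrable_const _) hF <| by
          filter_upwards [hZae, hle] with x hx hlex
          simpa [hx] using hlex
  · set a := ∫ x, Z x ∂μ
    set c := derivWithin f (Ioi a) a
    have hsupport : ∀ y ∈ Ici (0 : ℝ), f a + c * (y - a) ≤ f y :=
      fun y hy => hf.add_rightDeriv_mul_sub_le (by rwa [interior_Ici]) hy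
    have hslope : Integrable (fun x => c * (Z x - a)) μ :=
      (hZ.sub (integrable_const a)).const_mul c
    calc f a = ∫ x, (f a + c * (Z x - a)) ∂μ := by
          rw [integral_add (integrable_const _) hslope, integral_const_mul,
            integral_sub hZ (integrable_const a)]
          simp [a]
      _ ≤ ∫ x, F x ∂μ := integral_mono_ae ((integrable_const _).add hslope) hF <| by
          filter_upwards [hZ0, hle] with x hx hlex
          exact (hsupport _ hx).trans hlex

end ConvexOn

section Risks

variable {X : Type*}

lemma bestErr_le_genErr [MeasurableSpace X] {μ : Measure X} {ℓ : (X → ℝ) → X → ℝ → ℝ}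
    {η : X → ℝ} {H : Set (X → ℝ)} (hℓ : ∀ g x, 0 ≤ condRisk ℓ η g x) {g : X → ℝ}
    (hg : g ∈ H) : bestErr μ ℓ η H ≤ genErr μ ℓ η g :=
  csInf_le ⟨0, by rintro _ ⟨g', -, rfl⟩; exact integral_nonneg (hℓ g')⟩ ⟨g, hg, rfl⟩

lemma condRisk_loss01 (η g : X → ℝ) (x : X) :
    condRisk loss01 η g x = if 0 ≤ g x then 1 - η x else η x := by
  by_cases hg : 0 ≤ g x <;> simp [condRisk, condRiskT, loss01, sgn, hg] <;> norm_num

lemma condRisk_loss01_nonneg {η : X → ℝ} (hη : ∀ x, η x ∈ Icc (0 : ℝ) 1) (g : X → ℝ) (x : X) :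
    0 ≤ condRisk loss01 η g x := by
  rw [condRisk_loss01]
  split_ifs <;> linarith [(hη x).1, (hη x).2]

lemma condRisk_loss01_sub_bayes (η g : X → ℝ) (x : X) :
    condRisk loss01 η g x - condRisk loss01 η (fun x => η x - 1 / 2) x =
      if sgn (g x) * (η x - 1 / 2) ≤ 0 then 2 * |η x - 1 / 2| else 0 := by
  simp only [condRisk_loss01, sgn]
  split_ifs <;> first
    | linarith
    | (rw [abs_of_nonneg (by linarith)]; linarith)
    | (rw [abs_of_nonpos (by linarith)]; linarith)

lemma condRisk_loss01_bayes_le (η g : X → ℝ) (x : X) :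
    condRisk loss01 η (fun x => η x - 1 / 2) x ≤ condRisk loss01 η g x := by
  rw [← sub_nonneg, condRisk_loss01_sub_bayes]
  split_ifs <;> positivity

lemma bestErr_loss01_measurable [MeasurableSpace X] {μ : Measure X} {η : X → ℝ}
    (hηmeas : Measurable η) (hη : ∀ x, η x ∈ Icc (0 : ℝ) 1)
    (hInt : ∀ g : X → ℝ, Measurable g → Integrable (condRisk loss01 η g) μ) :
    bestErr μ loss01 η {g : X → ℝ | Measurable g} = genErr μ loss01 η (fun x => η x - 1 / 2) := by
  have hbayes : Measurable fun x => η x - 1 / 2 := hηmeas.sub_const _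
  refine le_antisymm (bestErr_le_genErr (condRisk_loss01_nonneg hη) hbayes) ?_
  refine le_csInf ⟨_, _, hbayes, rfl⟩ ?_
  rintro _ ⟨g, hg, rfl⟩
  exact integral_mono (hInt _ hbayes) (hInt g hg) (condRisk_loss01_bayes_le η g)

def marginCondRisk (Φ : ℝ → ℝ) (t α : ℝ) : ℝ := t * Φ α + (1 - t) * Φ (-α)

lemma condRisk_marginLoss (Φ : ℝ → ℝ) (η g : X → ℝ) (x : X) :
    condRisk (marginLoss Φ) η g x = marginCondRisk Φ (η x) (g x) := by
  simp [condRisk, condRiskT, marginLoss, marginCondRisk]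

lemma condRiskStar_marginLoss_measurable [MeasurableSpace X] (Φ : ℝ → ℝ) (η : X → ℝ) (x : X) :
    condRiskStar (marginLoss Φ) η {g : X → ℝ | Measurable g} x =
      ⨅ α, marginCondRisk Φ (η x) α := by
  refine congrArg sInf (Set.ext fun r => ⟨?_, ?_⟩)
  · rintro ⟨g, -, rfl⟩
    exact ⟨g x, (condRisk_marginLoss Φ η g x).symm⟩
  · rintro ⟨α, rfl⟩
    exact ⟨fun _ => α, measurable_const, condRisk_marginLoss Φ η _ x⟩

lemma marginCondRisk_nonneg {Φ : ℝ → ℝ} (hΦ : ∀ s, 0 ≤ Φ s) {t : ℝ} (ht : t ∈ Icc (0 : ℝ) 1)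
    (α : ℝ) : 0 ≤ marginCondRisk Φ t α :=
  add_nonneg (mul_nonneg ht.1 (hΦ α)) (mul_nonneg (sub_nonneg.2 ht.2) (hΦ (-α)))

lemma bddBelow_range_marginCondRisk {Φ : ℝ → ℝ} (hΦ : ∀ s, 0 ≤ Φ s) {t : ℝ} (ht : t ∈ Icc (0 : ℝ) 1) :
    BddBelow (range (marginCondRisk Φ t)) :=
  ⟨0, forall_mem_range.2 (marginCondRisk_nonneg hΦ ht)⟩

lemma condRisk_marginLoss_nonneg {Φ : ℝ → ℝ} (hΦ : ∀ s, 0 ≤ Φ s) {η : X → ℝ}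
    (hη : ∀ x, η x ∈ Icc (0 : ℝ) 1) (g : X → ℝ) (x : X) : 0 ≤ condRisk (marginLoss Φ) η g x :=
  condRisk_marginLoss Φ η g x ▸ marginCondRisk_nonneg hΦ (hη x) (g x)

lemma exists_seq_marginCondRisk_lt (Φ : ℝ → ℝ) :
    ∃ A : ℕ → ℝ, ∀ t α ε : ℝ, 0 < ε →
      ∃ n, marginCondRisk Φ t (A n) < marginCondRisk Φ t α + ε := by
  set P : ℝ → ℝ × ℝ := fun α => (Φ α, Φ (-α))
  have : Nonempty (range P) := ⟨⟨P 0, mem_range_self 0⟩⟩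
  obtain ⟨u, hu⟩ := TopologicalSpace.exists_dense_seq (range P)
  choose A hA using fun n => (u n).2
  refine ⟨A, fun t α ε hε => ?_⟩
  set U : Set (range P) := {p | t * p.1.1 + (1 - t) * p.1.2 < marginCondRisk Φ t α + ε}
  have hU : IsOpen U := isOpen_lt (by fun_prop) continuous_const
  obtain ⟨n, hn⟩ := hu.exists_mem_open hU
    ⟨⟨P α, mem_range_self α⟩, by simpa [U, P, marginCondRisk] using hε⟩
  refine ⟨n, ?_⟩
  simpa [U, marginCondRisk, ← hA n, P] using hn

lemma exists_measurable_marginCondRisk_le [MeasurableSpace X] {Φ : ℝ → ℝ}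
    {η : X → ℝ} (hηmeas : Measurable η) (hbdd : ∀ x, BddBelow (range (marginCondRisk Φ (η x))))
    {ε : ℝ} (hε : 0 < ε) :
    ∃ g : X → ℝ, Measurable g ∧ ∀ x, marginCondRisk Φ (η x) (g x) ≤
      (⨅ α, marginCondRisk Φ (η x) α) + ε := by
  classical
  obtain ⟨A, hA⟩ := exists_seq_marginCondRisk_lt Φ
  have hinf : ∀ x, ⨅ n, marginCondRisk Φ (η x) (A n) = ⨅ α, marginCondRisk Φ (η x) α := by
    intro x
    have hbddA : BddBelow (range fun n => marginCondRisk Φ (η x) (A n)) :=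
      (hbdd x).mono (range_comp_subset_range A (marginCondRisk Φ (η x)))
    refine le_antisymm (le_ciInf fun α => le_of_forall_pos_lt_add fun δ hδ => ?_)
      (le_ciInf fun n => ciInf_le (hbdd x) (A n))
    obtain ⟨n, hn⟩ := hA (η x) α δ hδ
    exact (ciInf_le hbddA n).trans_lt hn
  have hmeas : ∀ α, Measurable fun x => marginCondRisk Φ (η x) α := fun α => by
    unfold marginCondRisk; fun_prop
  have hinfmeas : Measurable fun x => ⨅ α, marginCondRisk Φ (η x) α := by
    simpa only [hinf] using Measurable.iInf fun n => hmeas (A n)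
  have hcover :
      ∀ x, ∃ n, marginCondRisk Φ (η x) (A n) < (⨅ α, marginCondRisk Φ (η x) α) + ε := by
    intro x
    rw [← hinf x]
    exact exists_lt_of_ciInf_lt (lt_add_of_pos_right _ hε)
  refine ⟨fun x => A (Nat.find (hcover x)), Measurable.find (fun n => measurable_const)
    (fun n => measurableSet_lt (hmeas (A n)) (hinfmeas.add_const ε)) hcover,
    fun x => (Nat.find_spec (hcover x)).le⟩

end Risks

section MeasurableHypotheses

variable {X : Type*} [MeasurableSpace X] {η : X → ℝ} {Φ : ℝ → ℝ}

lemma deltaC_marginLoss_measurable_nonneg (hη : ∀ x, η x ∈ Icc (0 : ℝ) 1)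
    (hΦ : ∀ s, 0 ≤ Φ s) (g : X → ℝ) (x : X) :
    0 ≤ deltaC (marginLoss Φ) η {g : X → ℝ | Measurable g} g x := by
  rw [deltaC, condRisk_marginLoss, condRiskStar_marginLoss_measurable, sub_nonneg]
  exact ciInf_le (bddBelow_range_marginCondRisk hΦ (hη x)) _

lemma exists_measurable_condRisk_marginLoss_le (hηmeas : Measurable η)
    (hη : ∀ x, η x ∈ Icc (0 : ℝ) 1) (hΦ : ∀ s, 0 ≤ Φ s) {ε : ℝ} (hε : 0 < ε) :
    ∃ g : X → ℝ, Measurable g ∧ ∀ x, condRisk (marginLoss Φ) η g x ≤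
      condRiskStar (marginLoss Φ) η {g : X → ℝ | Measurable g} x + ε := by
  obtain ⟨g, hg, hle⟩ := exists_measurable_marginCondRisk_le hηmeas
    (fun x => bddBelow_range_marginCondRisk hΦ (hη x)) hε
  refine ⟨g, hg, fun x => ?_⟩
  rw [condRisk_marginLoss, condRiskStar_marginLoss_measurable]
  exact hle x

lemma map_condRisk_loss01_sub_bayes_le_deltaC {Ψ : ℝ → ℝ} (hΨ0 : Ψ 0 = 0)
    (hη : ∀ x, η x ∈ Icc (0 : ℝ) 1) (hΦ : ∀ s, 0 ≤ Φ s) {x : X}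
    (hcond : Ψ (2 * |η x - 1/2|) ≤
      sInf ((fun g => deltaC (marginLoss Φ) η {g : X → ℝ | Measurable g} g x) ''
        {g : X → ℝ | Measurable g ∧ sgn (g x) * (η x - 1/2) ≤ 0}))
    {h : X → ℝ} (hh : Measurable h) :
    Ψ (condRisk loss01 η h x - condRisk loss01 η (fun x => η x - 1 / 2) x) ≤
      deltaC (marginLoss Φ) η {g : X → ℝ | Measurable g} h x := by
  rw [condRisk_loss01_sub_bayes]
  split_ifs with hwrong
  · refine hcond.trans (csInf_le ⟨0, ?_⟩ ⟨h, ⟨hh, hwrong⟩, rfl⟩)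
    rintro _ ⟨g, -, rfl⟩
    exact deltaC_marginLoss_measurable_nonneg hη hΦ g x
  · rw [hΨ0]
    exact deltaC_marginLoss_measurable_nonneg hη hΦ h x

end MeasurableHypotheses

open MeasureTheory Set in
theorem excess_error_Psi_bound_all_measurable_general
    {X : Type*} [MeasurableSpace X]
    (μ : Measure X) [IsProbabilityMeasure μ]
    (η : X → ℝ) (hηmeas : Measurable η) (hη01 : ∀ x, η x ∈ Icc (0:ℝ) 1)
    (Φ : ℝ → ℝ) (hΦpos : ∀ t, 0 ≤ Φ t)
    (hInt01 : ∀ g : X → ℝ, Measurable g → Integrable (condRisk loss01 η g) μ)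
    (hIntΦ : ∀ g : X → ℝ, Measurable g → Integrable (condRisk (marginLoss Φ) η g) μ)
    (Ψ : ℝ → ℝ) (hΨconv : ConvexOn ℝ (Ici (0:ℝ)) Ψ) (hΨ0 : Ψ 0 = 0)
    (hcond : ∀ x : X,
      Ψ (2 * |η x - 1/2|) ≤
        sInf ((fun g => deltaC (marginLoss Φ) η {g : X → ℝ | Measurable g} g x) ''
          {g : X → ℝ | Measurable g ∧ sgn (g x) * (η x - 1/2) ≤ 0}))
    (h : X → ℝ) (hh : Measurable h) :
    Ψ (genErr μ loss01 η h - bestErr μ loss01 η {g : X → ℝ | Measurable g})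
      ≤ genErr μ (marginLoss Φ) η h - bestErr μ (marginLoss Φ) η {g : X → ℝ | Measurable g} := by
  set H : Set (X → ℝ) := {g : X → ℝ | Measurable g}
  set bayes : X → ℝ := fun x => η x - 1 / 2
  have hbayes : Measurable bayes := hηmeas.sub_const _
  set Z : X → ℝ := fun x => condRisk loss01 η h x - condRisk loss01 η bayes x
  have hZ : Integrable Z μ := (hInt01 h hh).sub (hInt01 bayes hbayes)
  have hZ0 : ∀ x, 0 ≤ Z x := fun x => sub_nonneg.2 (condRisk_loss01_bayes_le η h x)
  rw [bestErr_loss01_measurable hηmeas hη01 hInt01, genErr, genErr,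
    ← integral_sub (hInt01 h hh) (hInt01 bayes hbayes)]
  refine le_of_forall_pos_le_add fun ε hε => ?_
  obtain ⟨g, hg, hgε⟩ := exists_measurable_condRisk_marginLoss_le hηmeas hη01 hΦpos hε
  have hdiff : Integrable
      (fun x => condRisk (marginLoss Φ) η h x - condRisk (marginLoss Φ) η g x) μ :=
    (hIntΦ h hh).sub (hIntΦ g hg)
  have hpoint (x : X) :
      Ψ (Z x) ≤ condRisk (marginLoss Φ) η h x - condRisk (marginLoss Φ) η g x + ε :=
    (map_condRisk_loss01_sub_bayes_le_deltaC hΨ0 hη01 hΦpos (hcond x) hh).trans <| by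
      rw [deltaC]
      linarith [hgε x]
  calc Ψ (∫ x, Z x ∂μ)
      ≤ ∫ x, (condRisk (marginLoss Φ) η h x - condRisk (marginLoss Φ) η g x + ε) ∂μ :=
        hΨconv.map_integral_le_of_ae_le (ae_of_all _ hZ0) hZ (hdiff.add (integrable_const ε))
          (ae_of_all _ hpoint)
    _ = genErr μ (marginLoss Φ) η h - genErr μ (marginLoss Φ) η g + ε := by
        rw [integral_add hdiff (integrable_const ε), integral_sub (hIntΦ h hh) (hIntΦ g hg)]
        simp [genErr]
    _ ≤ genErr μ (marginLoss Φ) η h - bestErr μ (marginLoss Φ) η H + ε := by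
        gcongr
        exact bestErr_le_genErr (condRisk_marginLoss_nonneg hΦpos hη01) hg

open MeasureTheory Set in
/-- **Excess error Ψ-bound for the family of all measurable functions** (Corollary 1). -/
theorem excess_error_Psi_bound_all_measurable
    {X : Type*} [MeasurableSpace X] [Nonempty X]
    (μ : Measure X) [IsProbabilityMeasure μ]
    (η : X → ℝ) (hηmeas : Measurable η) (hη01 : ∀ x, η x ∈ Icc (0:ℝ) 1)
    (Φ : ℝ → ℝ) (hΦpos : ∀ t, 0 ≤ Φ t)
    (hInt01 : ∀ g : X → ℝ, Measurable g → Integrable (condRisk loss01 η g) μ)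
    (hIntΦ : ∀ g : X → ℝ, Measurable g → Integrable (condRisk (marginLoss Φ) η g) μ)
    (Ψ : ℝ → ℝ) (hΨconv : ConvexOn ℝ (Ici (0:ℝ)) Ψ) (hΨ0 : Ψ 0 = 0)
    (hcond : ∀ x : X,
      Ψ (2 * |η x - 1/2|) ≤
        sInf ((fun g => deltaC (marginLoss Φ) η {g : X → ℝ | Measurable g} g x) ''
          {g : X → ℝ | Measurable g ∧ sgn (g x) * (η x - 1/2) ≤ 0}))
    (h : X → ℝ) (hh : Measurable h) :
    Ψ (genErr μ loss01 η h - bestErr μ loss01 η {g : X → ℝ | Measurable g})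
      ≤ genErr μ (marginLoss Φ) η h - bestErr μ (marginLoss Φ) η {g : X → ℝ | Measurable g} :=
  excess_error_Psi_bound_all_measurable_general μ η hηmeas hη01 Φ hΦpos hInt01 hIntΦ Ψ hΨconv hΨ0
    hcond h hh
end

section
/- Negative result for supremum-based convex losses: Suppose the zero function belongs to H and H is regular for adversarial calibration, i.e., there exist x₀∈X and f,g∈H with inf_{x':‖x₀−x'‖_p≤γ} f(x') > 0 and sup_{x':‖x₀−x'‖_p≤γ} g(x') < 0. Let Φ:ℝ→[0,∞) be convex and non-increasing, and let Φ̃ be its supremum-based loss. If f:[0,∞)→[0,∞) is non-decreasing and satisfies, for every distribution D over X×Y and every h∈H, R_{ℓ_γ}(h) − R*_{ℓ_γ,H} ≤ f(R_{Φ̃}(h) − R*_{Φ̃,H}), then f(t) ≥ 1/2 for every t ≥ 0. -/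
open MeasureTheory Set
open scoped ENNReal

noncomputable section

/-- Generalization error `R_ℓ(h)` with respect to the input-space set `XS`. -/
def genErrS {X : Type*} [MeasurableSpace X] (μ : Measure X) (XS : Set X)
    (ℓ : (X → ℝ) → X → ℝ → ℝ) (η : X → ℝ) (h : X → ℝ) : ℝ :=
  ∫ x in XS, condRisk ℓ η h x ∂μ

/-- Best-in-class error `R*_{ℓ,H}`. -/
def bestErrS {X : Type*} [MeasurableSpace X] (μ : Measure X) (XS : Set X)
    (ℓ : (X → ℝ) → X → ℝ → ℝ) (η : X → ℝ) (H : Set (X → ℝ)) : ℝ :=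
  sInf ((fun h => genErrS μ XS ℓ η h) '' H)

/-- Minimizability gap `M_{ℓ,H}`. -/
def minGapS {X : Type*} [MeasurableSpace X] (μ : Measure X) (XS : Set X)
    (ℓ : (X → ℝ) → X → ℝ → ℝ) (η : X → ℝ) (H : Set (X → ℝ)) : ℝ :=
  bestErrS μ XS ℓ η H - ∫ x in XS, condRiskStar ℓ η H x ∂μ

/-- `u_h(x) = inf_{‖x−x'‖ ≤ γ} h(x')`. -/
def uInf {E : Type*} [NormedAddCommGroup E] (γ : ℝ) (h : E → ℝ) (x : E) : ℝ :=
  sInf (h '' {x' | ‖x - x'‖ ≤ γ})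

/-- `o_h(x) = sup_{‖x−x'‖ ≤ γ} h(x')`. -/
def oSup {E : Type*} [NormedAddCommGroup E] (γ : ℝ) (h : E → ℝ) (x : E) : ℝ :=
  sSup (h '' {x' | ‖x - x'‖ ≤ γ})

/-- The adversarial zero-one loss `ℓ_γ(h,x,y) = sup_{‖x−x'‖ ≤ γ} 1_{y·h(x') ≤ 0}`. -/
def lossGamma {E : Type*} [NormedAddCommGroup E] (γ : ℝ) (h : E → ℝ) (x : E) (y : ℝ) : ℝ :=
  sSup ((fun x' => if y * h x' ≤ 0 then (1:ℝ) else 0) '' {x' | ‖x - x'‖ ≤ γ})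

/-- The supremum-based loss `Φ̃(h,x,y) = sup_{‖x−x'‖ ≤ γ} Φ(y·h(x'))`. -/
def supLoss {E : Type*} [NormedAddCommGroup E] (γ : ℝ) (Φ : ℝ → ℝ)
    (h : E → ℝ) (x : E) (y : ℝ) : ℝ :=
  sSup ((fun x' => Φ (y * h x')) '' {x' | ‖x - x'‖ ≤ γ})

/-- `H̄_γ(x) = {h ∈ H : u_h(x) ≤ 0 ≤ o_h(x)}`. -/
def Hbar {E : Type*} [NormedAddCommGroup E] (γ : ℝ) (H : Set (E → ℝ)) (x : E) :
    Set (E → ℝ) :=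
  {h ∈ H | uInf γ h x ≤ 0 ∧ 0 ≤ oSup γ h x}

/-- A hypothesis set is symmetric when it is closed under negation. -/
def IsSymmetricHyp {E : Type*} (H : Set (E → ℝ)) : Prop :=
  ∀ h : E → ℝ, h ∈ H ↔ (fun x => -(h x)) ∈ H

end

/-!
At a Dirac distribution `δ_{x₀}` with constant conditional probability `t`, the excess risks are
the conditional excess risks `ΔC(h, x₀, t)`. It therefore suffices to find `t ∈ [0,1]` and `h ∈ H`
with adversarial zero-one excess risk at least `1/2` and surrogate excess risk `0`, for then
`1/2 ≤ f 0 ≤ f t`.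

If every hypothesis has finite suprema `Φ̃(h, x₀, ±1)`, convexity gives
`Φ̃(h, x₀, 1) + Φ̃(h, x₀, -1) ≥ Φ(h x₀) + Φ(-h x₀) ≥ 2 Φ(0)`, so at `t = 1/2` the zero hypothesis
minimises the surrogate risk; yet it misclassifies both labels, paying `1` where `f₀` pays `1/2`.
Otherwise some `h₁ ∈ H` has an unbounded supremum for a label `y`, which `sSup` evaluates to `0`;
since `Φ` is non-increasing, `h₁` misclassifies `y` somewhere near `x₀`, and the pure label `y`
(`t = 1` or `t = 0`) works, `f₀` resp. `g₀` having zero adversarial risk there.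
-/

open MeasureTheory Set

section ConvexOn

variable {E : Type*} [AddCommGroup E] [Module ℝ E]

lemma ConvexOn.two_mul_apply_zero_le {Φ : E → ℝ} (hΦ : ConvexOn ℝ univ Φ) (u : E) :
    2 * Φ 0 ≤ Φ u + Φ (-u) := by
  have h := hΦ.2 (mem_univ u) (mem_univ (-u)) (by norm_num : (0:ℝ) ≤ 1/2)
    (by norm_num : (0:ℝ) ≤ 1/2) (by norm_num)
  rw [← smul_add, add_neg_cancel, smul_zero, smul_eq_mul, smul_eq_mul] at h
  linarith

end ConvexOn

section ConditionalRisk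

variable {X : Type*} {ℓ : (X → ℝ) → X → ℝ → ℝ} {H : Set (X → ℝ)} {x : X} {t : ℝ}

lemma deltaCT_eq_sub_of_isLeast {m : ℝ} (hm : IsLeast ((fun h' => condRiskT ℓ h' x t) '' H) m)
    (h : X → ℝ) : deltaCT ℓ H h x t = condRiskT ℓ h x t - m := by
  rw [deltaCT, hm.csInf_eq]

lemma deltaCT_one_eq {h₀ : X → ℝ} (hℓ : ∀ h ∈ H, 0 ≤ ℓ h x 1) (hh₀ : h₀ ∈ H)
    (hh₀x : ℓ h₀ x 1 = 0) (h : X → ℝ) : deltaCT ℓ H h x 1 = ℓ h x 1 := by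
  have hmin : IsLeast ((fun h' => condRiskT ℓ h' x 1) '' H) 0 :=
    ⟨⟨h₀, hh₀, by simp [condRiskT, hh₀x]⟩,
      forall_mem_image.2 fun h' hh' => by simpa [condRiskT] using hℓ h' hh'⟩
  simp [deltaCT_eq_sub_of_isLeast hmin, condRiskT]

lemma deltaCT_zero_eq {h₀ : X → ℝ} (hℓ : ∀ h ∈ H, 0 ≤ ℓ h x (-1)) (hh₀ : h₀ ∈ H)
    (hh₀x : ℓ h₀ x (-1) = 0) (h : X → ℝ) : deltaCT ℓ H h x 0 = ℓ h x (-1) := by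
  have hmin : IsLeast ((fun h' => condRiskT ℓ h' x 0) '' H) 0 :=
    ⟨⟨h₀, hh₀, by simp [condRiskT, hh₀x]⟩,
      forall_mem_image.2 fun h' hh' => by simpa [condRiskT] using hℓ h' hh'⟩
  simp [deltaCT_eq_sub_of_isLeast hmin, condRiskT]

end ConditionalRisk

section Dirac

variable {X : Type*} [MeasurableSpace X] [MeasurableSingletonClass X] {XS : Set X} {x₀ : X}

lemma genErrS_dirac_const (hx₀ : x₀ ∈ XS) (ℓ : (X → ℝ) → X → ℝ → ℝ) (t : ℝ) (h : X → ℝ) :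
    genErrS (Measure.dirac x₀) XS ℓ (fun _ => t) h = condRiskT ℓ h x₀ t := by
  classical
  rw [genErrS, restrict_dirac, if_pos hx₀, integral_dirac]
  rfl

lemma genErrS_sub_bestErrS_dirac_const (hx₀ : x₀ ∈ XS) (ℓ : (X → ℝ) → X → ℝ → ℝ)
    (H : Set (X → ℝ)) (t : ℝ) (h : X → ℝ) :
    genErrS (Measure.dirac x₀) XS ℓ (fun _ => t) h
      - bestErrS (Measure.dirac x₀) XS ℓ (fun _ => t) H = deltaCT ℓ H h x₀ t := by
  simp only [bestErrS, deltaCT, genErrS_dirac_const hx₀]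

end Dirac

section AdversarialLoss

variable {E : Type*} [NormedAddCommGroup E] {γ : ℝ} {h : E → ℝ} {x : E} {y : ℝ}

lemma pos_of_uInf_pos (hh : 0 < uInf γ h x) {x' : E} (hx' : ‖x - x'‖ ≤ γ) : 0 < h x' := by
  have hbdd : BddBelow (h '' {x' | ‖x - x'‖ ≤ γ}) := by
    by_contra hnb
    rw [uInf, Real.sInf_of_not_bddBelow hnb] at hh
    exact hh.false
  exact hh.trans_le (csInf_le hbdd ⟨x', hx', rfl⟩)

lemma neg_of_oSup_neg (hh : oSup γ h x < 0) {x' : E} (hx' : ‖x - x'‖ ≤ γ) : h x' < 0 := by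
  have hbdd : BddAbove (h '' {x' | ‖x - x'‖ ≤ γ}) := by
    by_contra hnb
    rw [oSup, Real.sSup_of_not_bddAbove hnb] at hh
    exact hh.false
  exact (le_csSup hbdd ⟨x', hx', rfl⟩).trans_lt hh

lemma lossGamma_nonneg (h : E → ℝ) (x : E) (y : ℝ) : 0 ≤ lossGamma γ h x y :=
  Real.sSup_nonneg (by rintro _ ⟨x', -, rfl⟩; dsimp only; split_ifs <;> norm_num)

lemma lossGamma_le_one (h : E → ℝ) (x : E) (y : ℝ) : lossGamma γ h x y ≤ 1 :=
  Real.sSup_le (by rintro _ ⟨x', -, rfl⟩; dsimp only; split_ifs <;> norm_num) zero_le_one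

lemma lossGamma_eq_one {x' : E} (hx' : ‖x - x'‖ ≤ γ) (hy : y * h x' ≤ 0) :
    lossGamma γ h x y = 1 :=
  (lossGamma_le_one h x y).antisymm <|
    le_csSup ⟨1, by rintro _ ⟨x'', -, rfl⟩; dsimp only; split_ifs <;> norm_num⟩ ⟨x', hx', if_pos hy⟩

lemma lossGamma_eq_zero (hy : ∀ x', ‖x - x'‖ ≤ γ → 0 < y * h x') : lossGamma γ h x y = 0 :=
  le_antisymm
    (Real.sSup_le (by rintro _ ⟨x', hx', rfl⟩; exact (if_neg (hy x' hx').not_ge).le) le_rfl)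
    (lossGamma_nonneg h x y)

lemma one_le_lossGamma_add (hγ : 0 ≤ γ) (h : E → ℝ) (x : E) :
    1 ≤ lossGamma γ h x 1 + lossGamma γ h x (-1) := by
  have hx : ‖x - x‖ ≤ γ := by simpa using hγ
  rcases le_or_gt (h x) 0 with hx0 | hx0
  · linarith [lossGamma_eq_one (y := 1) hx (by linarith), lossGamma_nonneg (γ := γ) h x (-1)]
  · linarith [lossGamma_eq_one (y := -1) hx (by linarith), lossGamma_nonneg (γ := γ) h x 1]

variable {Φ : ℝ → ℝ}

lemma supLoss_nonneg (hΦ : ∀ t, 0 ≤ Φ t) (h : E → ℝ) (x : E) (y : ℝ) :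
    0 ≤ supLoss γ Φ h x y :=
  Real.sSup_nonneg (by rintro _ ⟨x', -, rfl⟩; exact hΦ _)

lemma supLoss_const (hγ : 0 ≤ γ) (Φ : ℝ → ℝ) (c : ℝ) (x : E) (y : ℝ) :
    supLoss γ Φ (fun _ => c) x y = Φ (y * c) := by
  rw [supLoss, Set.Nonempty.image_const ⟨x, by simpa using hγ⟩, csSup_singleton]

lemma not_bddAbove_of_supLoss_add_lt (hγ : 0 ≤ γ) (hΦ : ConvexOn ℝ univ Φ)
    (hlt : supLoss γ Φ h x 1 + supLoss γ Φ h x (-1) < 2 * Φ 0) :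
    ¬BddAbove ((fun x' => Φ (1 * h x')) '' {x' | ‖x - x'‖ ≤ γ}) ∨
      ¬BddAbove ((fun x' => Φ (-1 * h x')) '' {x' | ‖x - x'‖ ≤ γ}) := by
  by_contra! hbdd
  have hx : ‖x - x‖ ≤ γ := by simpa using hγ
  have h₁ : Φ (1 * h x) ≤ supLoss γ Φ h x 1 := le_csSup hbdd.1 ⟨x, hx, rfl⟩
  have h₂ : Φ (-1 * h x) ≤ supLoss γ Φ h x (-1) := le_csSup hbdd.2 ⟨x, hx, rfl⟩
  rw [one_mul] at h₁
  rw [neg_one_mul] at h₂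
  linarith [hΦ.two_mul_apply_zero_le (h x)]

lemma lossGamma_eq_one_of_not_bddAbove (hΦ : Antitone Φ)
    (hnb : ¬BddAbove ((fun x' => Φ (y * h x')) '' {x' | ‖x - x'‖ ≤ γ})) :
    lossGamma γ h x y = 1 := by
  obtain ⟨_, ⟨x', hx', rfl⟩, hlt⟩ := not_bddAbove_iff.mp hnb (Φ 0)
  exact lossGamma_eq_one hx' (hΦ.reflect_lt hlt).le

variable {H : Set (E → ℝ)} {x₀ : E}

lemma half_le_deltaCT_lossGamma_zero_half (hγ : 0 ≤ γ) {f₀ : E → ℝ} (hf₀ : f₀ ∈ H)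
    (hf₀x : lossGamma γ f₀ x₀ 1 = 0) :
    1/2 ≤ deltaCT (lossGamma γ) H (fun _ => 0) x₀ (1/2) := by
  have hmin : IsLeast ((fun h => condRiskT (lossGamma γ) h x₀ (1/2)) '' H)
      (condRiskT (lossGamma γ) f₀ x₀ (1/2)) := by
    refine ⟨mem_image_of_mem _ hf₀, forall_mem_image.2 fun h _ => ?_⟩
    simp only [condRiskT, hf₀x]
    linarith [one_le_lossGamma_add hγ h x₀, lossGamma_le_one (γ := γ) f₀ x₀ (-1)]
  have hx₀ : ‖x₀ - x₀‖ ≤ γ := by simpa using hγ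
  rw [deltaCT_eq_sub_of_isLeast hmin, condRiskT, condRiskT, hf₀x,
    lossGamma_eq_one hx₀ (by norm_num), lossGamma_eq_one hx₀ (by norm_num)]
  linarith [lossGamma_le_one (γ := γ) f₀ x₀ (-1)]

lemma deltaCT_supLoss_zero_half (hγ : 0 ≤ γ) (hzero : (fun _ => (0:ℝ)) ∈ H)
    (hA : ∀ h ∈ H, 2 * Φ 0 ≤ supLoss γ Φ h x₀ 1 + supLoss γ Φ h x₀ (-1)) :
    deltaCT (supLoss γ Φ) H (fun _ => 0) x₀ (1/2) = 0 := by
  have hmin : IsLeast ((fun h => condRiskT (supLoss γ Φ) h x₀ (1/2)) '' H)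
      (condRiskT (supLoss γ Φ) (fun _ => 0) x₀ (1/2)) := by
    refine ⟨mem_image_of_mem _ hzero, forall_mem_image.2 fun h hh => ?_⟩
    simp only [condRiskT, supLoss_const hγ, mul_zero]
    linarith [hA h hh]
  rw [deltaCT_eq_sub_of_isLeast hmin, sub_self]

theorem exists_half_le_deltaCT_lossGamma_and_deltaCT_supLoss_eq_zero (hγ : 0 ≤ γ)
    (hzero : (fun _ => (0:ℝ)) ∈ H) {f₀ g₀ : E → ℝ} (hf₀ : f₀ ∈ H) (hg₀ : g₀ ∈ H)
    (hf₀pos : 0 < uInf γ f₀ x₀) (hg₀neg : oSup γ g₀ x₀ < 0) (hΦpos : ∀ t, 0 ≤ Φ t)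
    (hΦconv : ConvexOn ℝ univ Φ) (hΦanti : Antitone Φ) :
    ∃ t ∈ Icc (0:ℝ) 1, ∃ h ∈ H,
      1/2 ≤ deltaCT (lossGamma γ) H h x₀ t ∧ deltaCT (supLoss γ Φ) H h x₀ t = 0 := by
  have hf₀x : lossGamma γ f₀ x₀ 1 = 0 :=
    lossGamma_eq_zero fun x' hx' => by simpa using pos_of_uInf_pos hf₀pos hx'
  have hg₀x : lossGamma γ g₀ x₀ (-1) = 0 :=
    lossGamma_eq_zero fun x' hx' => by simpa using neg_of_oSup_neg hg₀neg hx'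
  by_cases hA : ∀ h ∈ H, 2 * Φ 0 ≤ supLoss γ Φ h x₀ 1 + supLoss γ Φ h x₀ (-1)
  · exact ⟨1/2, by norm_num, _, hzero, half_le_deltaCT_lossGamma_zero_half hγ hf₀ hf₀x,
      deltaCT_supLoss_zero_half hγ hzero hA⟩
  push Not at hA
  obtain ⟨h₁, hh₁, hlt⟩ := hA
  rcases not_bddAbove_of_supLoss_add_lt hγ hΦconv hlt with hnb | hnb
  · have hS : supLoss γ Φ h₁ x₀ 1 = 0 := Real.sSup_of_not_bddAbove hnb
    refine ⟨1, by norm_num, h₁, hh₁, ?_, ?_⟩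
    · rw [deltaCT_one_eq (fun h _ => lossGamma_nonneg h x₀ 1) hf₀ hf₀x,
        lossGamma_eq_one_of_not_bddAbove hΦanti hnb]
      norm_num
    · rw [deltaCT_one_eq (fun h _ => supLoss_nonneg hΦpos h x₀ 1) hh₁ hS, hS]
  · have hS : supLoss γ Φ h₁ x₀ (-1) = 0 := Real.sSup_of_not_bddAbove hnb
    refine ⟨0, by norm_num, h₁, hh₁, ?_, ?_⟩
    · rw [deltaCT_zero_eq (fun h _ => lossGamma_nonneg h x₀ (-1)) hg₀ hg₀x,
        lossGamma_eq_one_of_not_bddAbove hΦanti hnb]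
      norm_num
    · rw [deltaCT_zero_eq (fun h _ => supLoss_nonneg hΦpos h x₀ (-1)) hh₁ hS, hS]

end AdversarialLoss

open MeasureTheory Set in
theorem negative_result_sup_convex_general
    {d : ℕ} {p : ℝ≥0∞} [Fact (1 ≤ p)]
    [MeasurableSpace (PiLp p (fun _ : Fin d => ℝ))]
    [BorelSpace (PiLp p (fun _ : Fin d => ℝ))]
    (γ : ℝ) (hγ : 0 < γ)
    (XS : Set (PiLp p (fun _ : Fin d => ℝ)))
    (H : Set (PiLp p (fun _ : Fin d => ℝ) → ℝ))
    (hzero : (fun _ => (0:ℝ)) ∈ H)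
    (hregular : ∃ x₀ ∈ XS, ∃ f₀ ∈ H, ∃ g₀ ∈ H, 0 < uInf γ f₀ x₀ ∧ oSup γ g₀ x₀ < 0)
    (Φ : ℝ → ℝ) (hΦpos : ∀ t, 0 ≤ Φ t)
    (hΦconv : ConvexOn ℝ univ Φ) (hΦanti : Antitone Φ)
    (f : ℝ → ℝ) (hfmono : MonotoneOn f (Ici (0:ℝ)))
    (hbound : ∀ μ : Measure (PiLp p (fun _ : Fin d => ℝ)), IsProbabilityMeasure μ →
      μ XS = 1 →
      ∀ η : PiLp p (fun _ : Fin d => ℝ) → ℝ, Measurable η → (∀ x, η x ∈ Icc (0:ℝ) 1) →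
      ∀ h ∈ H,
        genErrS μ XS (lossGamma γ) η h - bestErrS μ XS (lossGamma γ) η H
          ≤ f (genErrS μ XS (supLoss γ Φ) η h - bestErrS μ XS (supLoss γ Φ) η H)) :
    ∀ t : ℝ, 0 ≤ t → 1/2 ≤ f t := by
  intro t ht
  obtain ⟨x₀, hx₀, f₀, hf₀, g₀, hg₀, hf₀pos, hg₀neg⟩ := hregular
  obtain ⟨c, hc, h, hh, hloss, hsup⟩ :=
    exists_half_le_deltaCT_lossGamma_and_deltaCT_supLoss_eq_zero hγ.le hzero hf₀ hg₀ hf₀pos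
      hg₀neg hΦpos hΦconv hΦanti
  have hb := hbound (Measure.dirac x₀) inferInstance (Measure.dirac_apply_of_mem hx₀)
    (fun _ => c) measurable_const (fun _ => hc) h hh
  rw [genErrS_sub_bestErrS_dirac_const hx₀, genErrS_sub_bestErrS_dirac_const hx₀, hsup] at hb
  calc (1/2 : ℝ) ≤ _ := hloss
    _ ≤ f 0 := hb
    _ ≤ f t := hfmono (mem_Ici.2 le_rfl) ht ht

open MeasureTheory Set in
/-- **Negative result for supremum-based convex losses** (Theorem 5, convex case). -/
theorem negative_result_sup_convex
    {d : ℕ} {p : ℝ≥0∞} [Fact (1 ≤ p)]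
    [MeasurableSpace (PiLp p (fun _ : Fin d => ℝ))]
    [BorelSpace (PiLp p (fun _ : Fin d => ℝ))]
    (γ : ℝ) (hγ : 0 < γ)
    (XS : Set (PiLp p (fun _ : Fin d => ℝ))) (hXSne : XS.Nonempty)
    (hXSmeas : MeasurableSet XS)
    (H : Set (PiLp p (fun _ : Fin d => ℝ) → ℝ)) (hHne : H.Nonempty)
    (hHmeas : ∀ h ∈ H, Measurable h)
    (hzero : (fun _ => (0:ℝ)) ∈ H)
    (hregular : ∃ x₀ ∈ XS, ∃ f₀ ∈ H, ∃ g₀ ∈ H, 0 < uInf γ f₀ x₀ ∧ oSup γ g₀ x₀ < 0)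
    (Φ : ℝ → ℝ) (hΦpos : ∀ t, 0 ≤ Φ t)
    (hΦconv : ConvexOn ℝ univ Φ) (hΦanti : Antitone Φ)
    (f : ℝ → ℝ) (hfpos : ∀ t, 0 ≤ t → 0 ≤ f t) (hfmono : MonotoneOn f (Ici (0:ℝ)))
    (hbound : ∀ μ : Measure (PiLp p (fun _ : Fin d => ℝ)), IsProbabilityMeasure μ →
      μ XS = 1 →
      ∀ η : PiLp p (fun _ : Fin d => ℝ) → ℝ, Measurable η → (∀ x, η x ∈ Icc (0:ℝ) 1) →
      ∀ h ∈ H,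
        genErrS μ XS (lossGamma γ) η h - bestErrS μ XS (lossGamma γ) η H
          ≤ f (genErrS μ XS (supLoss γ Φ) η h - bestErrS μ XS (supLoss γ Φ) η H)) :
    ∀ t : ℝ, 0 ≤ t → 1/2 ≤ f t :=
  negative_result_sup_convex_general γ hγ XS H hzero hregular Φ hΦpos hΦconv hΦanti f hfmono hbound
end
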